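/- arXiv:math/0602674 — 4 statements merged into one kernel-verified Lean document; each statement's English description precedes it below -/
import Mathlib

section
/- Let U, M, N be symmetric linear operators on a finite-dimensional Euclidean space such that M and N are nonnegative definite and U is strictly positive definite. Then Tr(MU + NU⁻¹) ≥ 2 Tr(√M · √N), with equality if and only if √M · U = √N. -/
/-!
Factor `U = Bᴴ B` with `B = √U` and put `X = B √M - B⁻ᴴ √N`. Expanding and using cyclicity of the
trace, `Tr(X Xᴴ) = Tr(MU + NU⁻¹) - 2 Tr(√M √N)`. The left side is nonnegative and vanishes only for
`X = 0`, and `X = 0` is equivalent to `√M U = √N` once `Bᴴ` is moved across and adjoints are taken.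
-/

open Matrix

namespace Matrix.PosSemidef

/-- The positive semidefinite square root of a positive semidefinite matrix
(the definition Mathlib had in December 2024, since removed). -/
noncomputable def sqrt {n : Type*} [Fintype n] [DecidableEq n] {𝕜 : Type*} [RCLike 𝕜] [PartialOrder 𝕜]
    {A : Matrix n n 𝕜} (hA : A.PosSemidef) : Matrix n n 𝕜 :=
  hA.1.eigenvectorUnitary.1 * diagonal ((↑) ∘ (√·) ∘ hA.1.eigenvalues) *
  (star hA.1.eigenvectorUnitary : Matrix n n 𝕜)

end Matrix.PosSemidef

section

open scoped ComplexOrder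

namespace Matrix.PosSemidef

variable {n 𝕜 : Type*} [Fintype n] [DecidableEq n] [RCLike 𝕜] {A : Matrix n n 𝕜}

lemma sqrt_eq_conjStarAlgAut (hA : A.PosSemidef) :
    hA.sqrt = Unitary.conjStarAlgAut 𝕜 _ hA.1.eigenvectorUnitary
      (diagonal (RCLike.ofReal ∘ (√·) ∘ hA.1.eigenvalues)) := rfl

lemma posSemidef_sqrt (hA : A.PosSemidef) : hA.sqrt.PosSemidef := by
  rw [sqrt_eq_conjStarAlgAut, Unitary.conjStarAlgAut_apply, star_eq_conjTranspose]
  refine PosSemidef.mul_mul_conjTranspose_same (.diagonal fun i => ?_) _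
  simp

lemma sqrt_mul_self (hA : A.PosSemidef) : hA.sqrt * hA.sqrt = A := by
  conv_rhs => rw [hA.1.spectral_theorem]
  rw [sqrt_eq_conjStarAlgAut, ← map_mul, diagonal_mul_diagonal]
  congr 2
  ext i
  simp [← RCLike.ofReal_mul, Real.mul_self_sqrt (hA.eigenvalues_nonneg i)]

lemma conjTranspose_sqrt_mul_sqrt (hA : A.PosSemidef) : hA.sqrtᴴ * hA.sqrt = A := by
  rw [hA.posSemidef_sqrt.isHermitian.eq, sqrt_mul_self]

lemma isUnit_det_sqrt (hA : A.PosSemidef) (hA' : IsUnit A) : IsUnit hA.sqrt.det := by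
  rw [← isUnit_iff_isUnit_det]
  exact isUnit_of_mul_isUnit_left (hA.sqrt_mul_self ▸ hA')

end Matrix.PosSemidef

end

namespace Matrix

variable {n R : Type*} [Fintype n] [DecidableEq n] [Field R] [StarRing R]
  {S T B : Matrix n n R}

lemma trace_mul_conjTranspose_self_sub_eq (hS : S.IsHermitian) (hT : T.IsHermitian)
    (hB : IsUnit B.det) :
    ((B * S - B⁻¹ᴴ * T) * (B * S - B⁻¹ᴴ * T)ᴴ).trace =
      (S * S * (Bᴴ * B) + T * T * (Bᴴ * B)⁻¹).trace - 2 * (S * T).trace := by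
  have hBB : B⁻¹ * B = 1 := nonsing_inv_mul B hB
  have hBB' : Bᴴ * B⁻¹ᴴ = 1 := by rw [← conjTranspose_mul, hBB, conjTranspose_one]
  have h₁ : (B * S * (S * Bᴴ)).trace = (S * S * (Bᴴ * B)).trace := by
    rw [Matrix.mul_assoc, trace_mul_comm]; simp only [Matrix.mul_assoc]
  have h₂ : (B * S * (T * B⁻¹)).trace = (S * T).trace := by
    rw [Matrix.mul_assoc, trace_mul_comm]; simp only [Matrix.mul_assoc, hBB, Matrix.mul_one]
  have h₃ : (B⁻¹ᴴ * T * (S * Bᴴ)).trace = (S * T).trace := by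
    rw [Matrix.mul_assoc, trace_mul_comm, trace_mul_comm S]
    simp only [Matrix.mul_assoc, hBB', Matrix.mul_one]
  have h₄ : (B⁻¹ᴴ * T * (T * B⁻¹)).trace = (T * T * (Bᴴ * B)⁻¹).trace := by
    rw [Matrix.mul_assoc, trace_mul_comm, Matrix.mul_inv_rev, conjTranspose_nonsing_inv]
    simp only [Matrix.mul_assoc]
  rw [conjTranspose_sub, conjTranspose_mul, conjTranspose_mul, hS.eq, hT.eq,
    conjTranspose_conjTranspose, sub_mul, mul_sub, mul_sub, trace_sub, trace_sub, trace_sub,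
    trace_add, h₁, h₂, h₃, h₄]
  ring

lemma mul_eq_inv_conjTranspose_mul_iff (hS : S.IsHermitian) (hT : T.IsHermitian)
    (hB : IsUnit B.det) : B * S = B⁻¹ᴴ * T ↔ S * (Bᴴ * B) = T := by
  have hBB : Bᴴ * B⁻¹ᴴ = 1 := by
    rw [← conjTranspose_mul, nonsing_inv_mul B hB, conjTranspose_one]
  have hBB' : B⁻¹ᴴ * Bᴴ = 1 := by
    rw [← conjTranspose_mul, mul_nonsing_inv B hB, conjTranspose_one]
  calc B * S = B⁻¹ᴴ * T ↔ Bᴴ * B * S = T := by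
        constructor <;> intro h
        · rw [Matrix.mul_assoc, h, ← Matrix.mul_assoc, hBB, Matrix.one_mul]
        · rw [← h, ← Matrix.mul_assoc, ← Matrix.mul_assoc, hBB', Matrix.one_mul]
    _ ↔ S * (Bᴴ * B) = T := by
        rw [← conjTranspose_inj, conjTranspose_mul, conjTranspose_mul, conjTranspose_conjTranspose,
          hS.eq, hT.eq]

variable [PartialOrder R] [StarOrderedRing R]

theorem two_mul_trace_mul_le_trace (hS : S.IsHermitian) (hT : T.IsHermitian)
    (hB : IsUnit B.det) :
    2 * (S * T).trace ≤ (S * S * (Bᴴ * B) + T * T * (Bᴴ * B)⁻¹).trace ∧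
      ((S * S * (Bᴴ * B) + T * T * (Bᴴ * B)⁻¹).trace = 2 * (S * T).trace ↔
        S * (Bᴴ * B) = T) := by
  have key := trace_mul_conjTranspose_self_sub_eq hS hT hB
  refine ⟨sub_nonneg.mp (key ▸ (posSemidef_self_mul_conjTranspose _).trace_nonneg), ?_⟩
  rw [← mul_eq_inv_conjTranspose_mul_iff hS hT hB, ← sub_eq_zero (a := B * S),
    ← trace_mul_conjTranspose_self_eq_zero_iff, key, sub_eq_zero]

end Matrix

/-- Trace inequality for symmetric operators: for `M, N` nonnegative definite
and `U` positive definite, `Tr(MU + NU⁻¹) ≥ 2 Tr(√M √N)`, with equality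
iff `√M U = √N`. -/
theorem stmt0 {m : ℕ} (U M N : Matrix (Fin m) (Fin m) ℝ)
    (hM : M.PosSemidef) (hN : N.PosSemidef) (hU : U.PosDef) :
    2 * (hM.sqrt * hN.sqrt).trace ≤ (M * U + N * U⁻¹).trace ∧
    ((M * U + N * U⁻¹).trace = 2 * (hM.sqrt * hN.sqrt).trace ↔
      hM.sqrt * U = hN.sqrt) := by
  have hB := hU.posSemidef.isUnit_det_sqrt hU.isUnit
  simpa only [hU.posSemidef.conjTranspose_sqrt_mul_sqrt, hM.sqrt_mul_self, hN.sqrt_mul_self]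
    using Matrix.two_mul_trace_mul_le_trace hM.posSemidef_sqrt.isHermitian
      hN.posSemidef_sqrt.isHermitian hB
end

section
/- Let ξ : ℝ → ℝ^m solve ξ''(t) + R(t)ξ(t) = 0 with R(t) symmetric negative semidefinite for all t. Then a solution ξ is such that t ↦ |ξ(t)| is nondecreasing on all of ℝ if and only if |ξ(t)| is bounded for t ≤ 0. -/
/-!
Along a solution, `f = ξ ⬝ᵥ ξ` has `f'' = 2 (ξ' ⬝ᵥ ξ' - R ξ ⬝ᵥ ξ) ≥ 0`, so `f` is convex. A convex
function on `ℝ` that decreases somewhere grows at least linearly towards `-∞`; hence if `f` is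
bounded on `(-∞, 0]` it is nondecreasing, and so is `|ξ| = √f`.
-/

open Matrix Set Filter

theorem HasDerivAt.dotProduct {𝕜 ι : Type*} [NontriviallyNormedField 𝕜] [Fintype ι]
    {f g : 𝕜 → ι → 𝕜} {f' g' : ι → 𝕜} {t : 𝕜} (hf : HasDerivAt f f' t)
    (hg : HasDerivAt g g' t) :
    HasDerivAt (fun t => f t ⬝ᵥ g t) (f' ⬝ᵥ g t + f t ⬝ᵥ g') t := by
  have hterm : ∀ i ∈ Finset.univ, HasDerivAt (fun t => f t i * g t i)
      (f' i * g t i + f t i * g' i) t := fun i _ =>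
    (hasDerivAt_pi.1 hf i).mul (hasDerivAt_pi.1 hg i)
  simpa only [_root_.dotProduct, Finset.sum_add_distrib] using HasDerivAt.fun_sum hterm

theorem ConvexOn.monotone_of_bddAbove_Iic {f : ℝ → ℝ} (hf : ConvexOn ℝ univ f) {a : ℝ}
    (hbdd : BddAbove (f '' Iic a)) : Monotone f := by
  intro x y hxy
  rcases hxy.eq_or_lt with rfl | hxy
  · rfl
  by_contra! hdec
  obtain ⟨C, hC⟩ := hbdd
  set s := (f y - f x) / (y - x)
  have hs : s < 0 := div_neg_of_neg_of_pos (by linarith) (by linarith)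
  have hsecant : ∀ z < x, f x + s * (z - x) ≤ f z := by
    intro z hz
    have := hf.slope_mono_adjacent (mem_univ z) (mem_univ y) hz hxy
    rw [div_le_iff₀ (by linarith)] at this
    linarith
  have hline : Tendsto (fun z => f x + s * (z - x)) atBot atTop :=
    tendsto_atTop_add_const_left _ _
      ((tendsto_atBot_add_const_right _ _ tendsto_id).const_mul_atBot_of_neg hs)
  obtain ⟨z, hzC, hzx, hza⟩ := ((hline.eventually_gt_atTop C).and
    ((eventually_lt_atBot x).and (eventually_le_atBot a))).exists
  linarith [hC ⟨z, hza, rfl⟩, hsecant z hzx]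

theorem convexOn_dotProduct_self_of_deriv_deriv_add_mulVec_eq_zero {m : ℕ}
    {R : ℝ → Matrix (Fin m) (Fin m) ℝ} {ξ : ℝ → Fin m → ℝ}
    (hRneg : ∀ t x, (R t).mulVec x ⬝ᵥ x ≤ 0) (hξ : ContDiff ℝ 2 ξ)
    (hODE : ∀ t, deriv (deriv ξ) t + (R t).mulVec (ξ t) = 0) :
    ConvexOn ℝ univ (fun t => ξ t ⬝ᵥ ξ t) := by
  have hξ₁ : Differentiable ℝ ξ := hξ.differentiable (by norm_num)
  have hξ₂ : Differentiable ℝ (deriv ξ) := hξ.differentiable_deriv_two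
  have hf' : ∀ t, HasDerivAt (fun t => ξ t ⬝ᵥ ξ t) (2 * (deriv ξ t ⬝ᵥ ξ t)) t := fun t => by
    simpa only [dotProduct_comm (ξ t), two_mul] using
      (hξ₁ t).hasDerivAt.dotProduct (hξ₁ t).hasDerivAt
  have hf'' : ∀ t, HasDerivAt (fun t => 2 * (deriv ξ t ⬝ᵥ ξ t))
      (2 * (deriv (deriv ξ) t ⬝ᵥ ξ t + deriv ξ t ⬝ᵥ deriv ξ t)) t := fun t =>
    ((hξ₂ t).hasDerivAt.dotProduct (hξ₁ t).hasDerivAt).const_mul 2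
  have hf''_nonneg : ∀ t, 0 ≤ 2 * (deriv (deriv ξ) t ⬝ᵥ ξ t + deriv ξ t ⬝ᵥ deriv ξ t) := by
    intro t
    have hacc : 0 ≤ deriv (deriv ξ) t ⬝ᵥ ξ t := by
      rw [eq_neg_of_add_eq_zero_left (hODE t), neg_dotProduct]
      linarith [hRneg t (ξ t)]
    have hvel : 0 ≤ deriv ξ t ⬝ᵥ deriv ξ t :=
      Finset.sum_nonneg fun i _ => mul_self_nonneg _
    positivity
  have hderiv : deriv (fun t => ξ t ⬝ᵥ ξ t) = fun t => 2 * (deriv ξ t ⬝ᵥ ξ t) :=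
    funext fun t => (hf' t).deriv
  refine Monotone.convexOn_univ_of_deriv (fun t => (hf' t).differentiableAt) ?_
  rw [hderiv]
  exact monotone_of_deriv_nonneg (fun t => (hf'' t).differentiableAt)
    fun t => (hf'' t).deriv ▸ hf''_nonneg t

theorem stmt4_general {m : ℕ} (R : ℝ → Matrix (Fin m) (Fin m) ℝ)
    (hRneg : ∀ t x, (R t).mulVec x ⬝ᵥ x ≤ 0)
    (ξ : ℝ → Fin m → ℝ) (hξ : ContDiff ℝ 2 ξ)
    (hODE : ∀ t, deriv (deriv ξ) t + (R t).mulVec (ξ t) = 0) :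
    Monotone (fun t => Real.sqrt (ξ t ⬝ᵥ ξ t)) ↔
      ∃ C : ℝ, ∀ t ≤ (0:ℝ), Real.sqrt (ξ t ⬝ᵥ ξ t) ≤ C := by
  constructor
  · exact fun hmono => ⟨_, fun t ht => hmono ht⟩
  · rintro ⟨C, hC⟩
    have hbdd : BddAbove ((fun t => ξ t ⬝ᵥ ξ t) '' Iic 0) :=
      ⟨C ^ 2, by rintro _ ⟨t, ht, rfl⟩; exact (Real.sqrt_le_iff.1 (hC t ht)).2⟩
    have hconvex := convexOn_dotProduct_self_of_deriv_deriv_add_mulVec_eq_zero hRneg hξ hODE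
    exact Real.sqrt_monotone.comp (hconvex.monotone_of_bddAbove_Iic hbdd)

/-- For a solution of `ξ'' + R(t) ξ = 0` with `R(t)` symmetric negative
semidefinite, `t ↦ |ξ(t)|` is nondecreasing on all of `ℝ` iff `|ξ(t)|` is
bounded for `t ≤ 0`. -/
theorem stmt4 {m : ℕ} (R : ℝ → Matrix (Fin m) (Fin m) ℝ) (hRc : Continuous R)
    (hRsym : ∀ t, (R t).IsSymm) (hRneg : ∀ t x, (R t).mulVec x ⬝ᵥ x ≤ 0)
    (ξ : ℝ → Fin m → ℝ) (hξ : ContDiff ℝ 2 ξ)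
    (hODE : ∀ t, deriv (deriv ξ) t + (R t).mulVec (ξ t) = 0) :
    Monotone (fun t => Real.sqrt (ξ t ⬝ᵥ ξ t)) ↔
      ∃ C : ℝ, ∀ t ≤ (0:ℝ), Real.sqrt (ξ t ⬝ᵥ ξ t) ≤ C :=
  stmt4_general R hRneg ξ hξ hODE
end

section
/- Let V : ℝ → Sym(m, ℝ) be a differentiable path of symmetric matrices satisfying the Riccati equation V'(t) + V(t)² + R(t) = 0, with V(t) nonnegative definite and R(t) symmetric negative semidefinite for all t. Then for each t, R(t) vanishes on ker V(t), and both R(t) and V(t) preserve the orthogonal complement of ker V(t). -/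
/-!
If `V(t) x = 0`, the nonnegative function `s ↦ ⟨V(s) x, x⟩` attains its minimum `0` at `t`, so
`⟨V'(t) x, x⟩ = 0`. Since `V(t)² x = 0`, the Riccati equation turns this into `⟨R(t) x, x⟩ = 0`,
and for the negative semidefinite `R(t)` this forces `R(t) x = 0`. Preservation of
`(ker V(t))^⊥` by the symmetric operators `R(t)` and `V(t)` then follows because both kill
`ker V(t)`.
-/

open Matrix

namespace Matrix

variable {n : Type*} [Fintype n]

theorem IsSymm.mulVec_dotProduct_comm {A : Matrix n n ℝ} (hA : A.IsSymm) (x y : n → ℝ) :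
    A *ᵥ x ⬝ᵥ y = A *ᵥ y ⬝ᵥ x := by
  rw [dotProduct_comm, dotProduct_mulVec, ← mulVec_transpose, hA.eq]

theorem IsSymm.mulVec_dotProduct_eq_zero_of_mulVec_eq_zero {A : Matrix n n ℝ} (hA : A.IsSymm)
    (x : n → ℝ) {y : n → ℝ} (hy : A *ᵥ y = 0) : A *ᵥ x ⬝ᵥ y = 0 := by
  rw [hA.mulVec_dotProduct_comm, hy, zero_dotProduct]

theorem IsSymm.posSemidef_neg {A : Matrix n n ℝ} (hA : A.IsSymm)
    (hneg : ∀ x, A *ᵥ x ⬝ᵥ x ≤ 0) : (-A).PosSemidef := by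
  refine posSemidef_iff_dotProduct_mulVec.mpr ⟨?_, fun x => ?_⟩
  · rw [IsHermitian, conjTranspose_neg, conjTranspose_eq_transpose_of_trivial, hA.eq]
  · rw [star_trivial, neg_mulVec, dotProduct_neg, dotProduct_comm, neg_nonneg]
    exact hneg x

theorem IsSymm.mulVec_eq_zero_of_dotProduct_eq_zero {A : Matrix n n ℝ} (hA : A.IsSymm)
    (hneg : ∀ x, A *ᵥ x ⬝ᵥ x ≤ 0) {x : n → ℝ} (hx : A *ᵥ x ⬝ᵥ x = 0) : A *ᵥ x = 0 := by
  have h := (hA.posSemidef_neg hneg).dotProduct_mulVec_zero_iff x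
  rw [star_trivial, neg_mulVec, dotProduct_neg, dotProduct_comm, hx, neg_zero] at h
  exact neg_eq_zero.mp (h.mp rfl)

theorem hasDerivAt_mulVec_dotProduct {A : ℝ → Matrix n n ℝ} {A' : Matrix n n ℝ} {t : ℝ}
    (hA : ∀ i j, HasDerivAt (fun s => A s i j) (A' i j) t) (x y : n → ℝ) :
    HasDerivAt (fun s => A s *ᵥ x ⬝ᵥ y) (A' *ᵥ x ⬝ᵥ y) t := by
  simp only [dotProduct, mulVec]
  exact HasDerivAt.fun_sum fun i _ =>
    (HasDerivAt.fun_sum fun j _ => (hA i j).mul_const (x j)).mul_const (y i)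

theorem deriv_mulVec_dotProduct_eq_zero_of_mulVec_eq_zero {A : ℝ → Matrix n n ℝ}
    {A' : Matrix n n ℝ} {t : ℝ} (hA : ∀ i j, HasDerivAt (fun s => A s i j) (A' i j) t)
    {x : n → ℝ} (hpos : ∀ s, 0 ≤ A s *ᵥ x ⬝ᵥ x) (hx : A t *ᵥ x = 0) :
    A' *ᵥ x ⬝ᵥ x = 0 := by
  have hmin : IsLocalMin (fun s => A s *ᵥ x ⬝ᵥ x) t :=
    Filter.Eventually.of_forall fun s => by simpa only [hx, zero_dotProduct] using hpos s
  exact hmin.hasDerivAt_eq_zero (hasDerivAt_mulVec_dotProduct hA x x)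

end Matrix

theorem riccati_mulVec_eq_zero_of_mulVec_eq_zero {n : Type*} [Fintype n] [DecidableEq n]
    {V R : ℝ → Matrix n n ℝ} {V' : Matrix n n ℝ} {t : ℝ}
    (hRsym : (R t).IsSymm) (hVpos : ∀ s x, 0 ≤ V s *ᵥ x ⬝ᵥ x)
    (hRneg : ∀ x, R t *ᵥ x ⬝ᵥ x ≤ 0) (hV' : ∀ i j, HasDerivAt (fun s => V s i j) (V' i j) t)
    (hRic : V' + V t ^ 2 + R t = 0) {x : n → ℝ} (hx : V t *ᵥ x = 0) : R t *ᵥ x = 0 := by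
  have hV'x : V' *ᵥ x ⬝ᵥ x = 0 :=
    deriv_mulVec_dotProduct_eq_zero_of_mulVec_eq_zero hV' (fun s => hVpos s x) hx
  have hsq : V t ^ 2 *ᵥ x = 0 := by rw [sq, ← mulVec_mulVec, hx, mulVec_zero]
  have hV'_eq : V' = -(V t ^ 2 + R t) := eq_neg_of_add_eq_zero_left (by rw [← add_assoc, hRic])
  refine hRsym.mulVec_eq_zero_of_dotProduct_eq_zero hRneg ?_
  rwa [hV'_eq, neg_mulVec, add_mulVec, hsq, zero_add, neg_dotProduct, neg_eq_zero] at hV'x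

theorem stmt6_general {m : ℕ} (V V' R : ℝ → Matrix (Fin m) (Fin m) ℝ)
    (hVsym : ∀ t, (V t).IsSymm) (hRsym : ∀ t, (R t).IsSymm)
    (hVpos : ∀ t x, 0 ≤ (V t).mulVec x ⬝ᵥ x)
    (hRneg : ∀ t x, (R t).mulVec x ⬝ᵥ x ≤ 0)
    (hV' : ∀ t i j, HasDerivAt (fun s => V s i j) (V' t i j) t)
    (hRic : ∀ t, V' t + (V t) ^ 2 + R t = 0) :
    ∀ t : ℝ,
      (∀ x : Fin m → ℝ, (V t).mulVec x = 0 → (R t).mulVec x = 0) ∧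
      (∀ x : Fin m → ℝ, (∀ y : Fin m → ℝ, (V t).mulVec y = 0 → x ⬝ᵥ y = 0) →
        (∀ y : Fin m → ℝ, (V t).mulVec y = 0 → (R t).mulVec x ⬝ᵥ y = 0) ∧
        (∀ y : Fin m → ℝ, (V t).mulVec y = 0 → (V t).mulVec x ⬝ᵥ y = 0)) := by
  intro t
  have hRker : ∀ x : Fin m → ℝ, V t *ᵥ x = 0 → R t *ᵥ x = 0 := fun x hx =>
    riccati_mulVec_eq_zero_of_mulVec_eq_zero (hRsym t) hVpos (hRneg t) (hV' t) (hRic t) hx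
  refine ⟨hRker, fun x _ => ⟨fun y hy => ?_, fun y hy => ?_⟩⟩
  · exact (hRsym t).mulVec_dotProduct_eq_zero_of_mulVec_eq_zero x (hRker y hy)
  · exact (hVsym t).mulVec_dotProduct_eq_zero_of_mulVec_eq_zero x hy

/-- For a nonnegative-definite symmetric solution `V` of the Riccati equation
`V' + V² + R = 0` with `R(t)` symmetric negative semidefinite (in the flow
setting where every vector of `ker V(t)` arises as the value of a Jacobi
solution with vanishing derivative on `(-∞, t]`), the operator `R(t)` vanishes
on `ker V(t)`, and both `R(t)` and `V(t)` preserve the orthogonal complement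
of `ker V(t)`. -/
theorem stmt6 {m : ℕ} (V V' R : ℝ → Matrix (Fin m) (Fin m) ℝ)
    (hVsym : ∀ t, (V t).IsSymm) (hRsym : ∀ t, (R t).IsSymm)
    (hVpos : ∀ t x, 0 ≤ (V t).mulVec x ⬝ᵥ x)
    (hRneg : ∀ t x, (R t).mulVec x ⬝ᵥ x ≤ 0)
    (hV' : ∀ t i j, HasDerivAt (fun s => V s i j) (V' t i j) t)
    (hRic : ∀ t, V' t + (V t) ^ 2 + R t = 0)
    (hker : ∀ t (x : Fin m → ℝ), (V t).mulVec x = 0 →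
      ∃ ξ : ℝ → Fin m → ℝ, ContDiff ℝ 2 ξ ∧
        (∀ s, deriv (deriv ξ) s + (R s).mulVec (ξ s) = 0) ∧
        ξ t = x ∧ ∀ s ≤ t, deriv ξ s = 0) :
    ∀ t : ℝ,
      (∀ x : Fin m → ℝ, (V t).mulVec x = 0 → (R t).mulVec x = 0) ∧
      (∀ x : Fin m → ℝ, (∀ y : Fin m → ℝ, (V t).mulVec y = 0 → x ⬝ᵥ y = 0) →
        (∀ y : Fin m → ℝ, (V t).mulVec y = 0 → (R t).mulVec x ⬝ᵥ y = 0) ∧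
        (∀ y : Fin m → ℝ, (V t).mulVec y = 0 → (V t).mulVec x ⬝ᵥ y = 0)) :=
  stmt6_general V V' R hVsym hRsym hVpos hRneg hV' hRic
end

section
/- Let A : ℝ → GL(m, ℝ) with A(t) = I + V(t)² for a C¹ family of symmetric matrices V(t) satisfying V'(t) = −V(t)² − R(t). Define a(t) = √(det A(t)) · det(exp(∫₀ᵗ V(s) ds)) (all matrices commuting is not assumed; the second factor is |det of the solution of the linear ODE ξ' = Vξ|). Then r(t) := (d/dt) log a(t) = ½ Tr(A'(t) A(t)⁻¹) + Tr V(t) = Tr[(V(t) − R(t)V(t))(I + V(t)²)⁻¹]. -/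
/-!
Jacobi's formula in Liouville's form, `(det M)' = tr B · det M` whenever `M' = B M`, gives
`(det A)' = tr(A' A⁻¹) · det A` and `(det Φ)' = tr V · det Φ`. The latter together with
`Φ 0 = 1` forces `det Φ = exp ∫₀ᵗ tr V > 0`, while `det A > 0` because `A = 1 + VᵀV`; so the
logarithmic derivative of `a` is `½ tr(A' A⁻¹) + tr V`. For the second form substitute
`V' = -V² - R` and use `tr V = tr(V A⁻¹) + tr(V³ A⁻¹)` and `tr(V R A⁻¹) = tr(R V A⁻¹)`, the
latter because `V` commutes with `A⁻¹`.
-/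

open Matrix

theorem Matrix.sum_det_updateRow_mul {n R : Type*} [Fintype n] [DecidableEq n] [CommRing R]
    (B M : Matrix n n R) :
    ∑ i, (M.updateRow i ((B * M) i)).det = B.trace * M.det := by
  have row_mul : ∀ i, (B * M) i = ∑ k, B i k • M k := fun i => by
    ext j; simp [mul_apply, Finset.sum_apply]
  simp only [row_mul, det_updateRow_sum, trace, diag, smul_eq_mul, Finset.sum_mul]

section EntrywiseDerivative

variable {n 𝕜 : Type*} [Fintype n] [NontriviallyNormedField 𝕜]

theorem Matrix.hasDerivAt_mul_apply {M N : 𝕜 → Matrix n n 𝕜} {M' N' : Matrix n n 𝕜} {t : 𝕜}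
    (hM : ∀ i j, HasDerivAt (fun s => M s i j) (M' i j) t)
    (hN : ∀ i j, HasDerivAt (fun s => N s i j) (N' i j) t) (i j : n) :
    HasDerivAt (fun s => (M s * N s) i j) ((M' * N t + M t * N') i j) t := by
  simp only [mul_apply, add_apply, ← Finset.sum_add_distrib]
  exact HasDerivAt.fun_sum fun k _ => (hM i k).mul (hN k j)

variable [DecidableEq n]

theorem Matrix.hasDerivAt_det {M : 𝕜 → Matrix n n 𝕜} {M' : Matrix n n 𝕜} {t : 𝕜}
    (hM : ∀ i j, HasDerivAt (fun s => M s i j) (M' i j) t) :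
    HasDerivAt (fun s => (M s).det) (∑ i, ((M t).updateRow i (M' i)).det) t := by
  have det_eq_sum_rows : ∀ N : Matrix n n 𝕜,
      N.det = ∑ σ : Equiv.Perm n, (Equiv.Perm.sign σ : 𝕜) * ∏ i, N i (σ i) := fun N => by
    rw [← det_transpose, det_apply']
    simp [transpose_apply]
  have prod_updateRow : ∀ i (σ : Equiv.Perm n), ∏ j, (M t).updateRow i (M' i) j (σ j)
      = (∏ j ∈ Finset.univ.erase i, M t j (σ j)) • M' i (σ i) := fun i σ => by
    rw [← Finset.mul_prod_erase _ _ (Finset.mem_univ i), smul_eq_mul, mul_comm]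
    congr 1
    · exact Finset.prod_congr rfl fun j hj => by
        rw [updateRow_apply, if_neg (Finset.ne_of_mem_erase hj)]
    · simp
  simp only [det_eq_sum_rows, prod_updateRow]
  rw [Finset.sum_comm]
  exact HasDerivAt.fun_sum fun σ _ =>
    (HasDerivAt.fun_finsetProd fun i _ => hM i (σ i)).const_mul _ |>.congr_deriv
      (Finset.mul_sum _ _ _)

theorem Matrix.hasDerivAt_det_of_hasDerivAt_mul {M : 𝕜 → Matrix n n 𝕜} {B : Matrix n n 𝕜} {t : 𝕜}
    (hM : ∀ i j, HasDerivAt (fun s => M s i j) ((B * M t) i j) t) :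
    HasDerivAt (fun s => (M s).det) (B.trace * (M t).det) t :=
  sum_det_updateRow_mul B (M t) ▸ hasDerivAt_det hM

end EntrywiseDerivative

theorem eq_mul_exp_integral_of_hasDerivAt {f τ : ℝ → ℝ} (hτ : Continuous τ)
    (hf : ∀ t, HasDerivAt f (τ t * f t) t) (t : ℝ) :
    f t = f 0 * Real.exp (∫ s in (0 : ℝ)..t, τ s) := by
  set F : ℝ → ℝ := fun u => ∫ s in (0 : ℝ)..u, τ s
  have hF : ∀ u, HasDerivAt F (τ u) u := fun u => (hτ.integral_hasStrictDerivAt 0 u).hasDerivAt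
  have hconst : ∀ u, HasDerivAt (fun s => f s * Real.exp (-F s)) 0 u := fun u =>
    ((hf u).mul (hF u).neg.exp).congr_deriv (by ring)
  have := is_const_of_deriv_eq_zero (fun u => (hconst u).differentiableAt)
    (fun u => (hconst u).deriv) t 0
  simp only [F, intervalIntegral.integral_same, neg_zero, Real.exp_zero, mul_one] at this
  rw [← this, mul_assoc, ← Real.exp_add, neg_add_cancel, Real.exp_zero, mul_one]

theorem HasDerivAt.log_sqrt_mul {a b : ℝ → ℝ} {α β t : ℝ} (ha : HasDerivAt a (α * a t) t)
    (hb : HasDerivAt b (β * b t) t) (ha0 : 0 < a t) (hb0 : b t ≠ 0) :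
    HasDerivAt (fun s => Real.log (Real.sqrt (a s) * b s)) (α / 2 + β) t := by
  have hsqrt : 0 < Real.sqrt (a t) := Real.sqrt_pos.mpr ha0
  refine ((ha.sqrt ha0.ne').mul hb).log (mul_ne_zero hsqrt.ne' hb0) |>.congr_deriv ?_
  simp only [Pi.mul_apply]
  field_simp
  rw [Real.sq_sqrt ha0.le]
  ring

open scoped ComplexOrder in
theorem Matrix.IsHermitian.posDef_one_add_sq {n 𝕜 : Type*} [Fintype n] [DecidableEq n] [RCLike 𝕜]
    {V : Matrix n n 𝕜} (hV : V.IsHermitian) : (1 + V ^ 2).PosDef := by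
  have := posSemidef_conjTranspose_mul_self V
  rw [hV.eq, ← sq] at this
  exact PosDef.one.add_posSemidef this

theorem Matrix.trace_riccati_identity {n 𝕜 : Type*} [Fintype n] [DecidableEq n] [Field 𝕜] [CharZero 𝕜]
    {V R : Matrix n n 𝕜} (hA : IsUnit (1 + V ^ 2).det) :
    (1 / 2) * (((-V ^ 2 - R) * V + V * (-V ^ 2 - R)) * (1 + V ^ 2)⁻¹).trace + V.trace
      = ((V - R * V) * (1 + V ^ 2)⁻¹).trace := by
  set W := (1 + V ^ 2)⁻¹
  have hAW : (1 + V ^ 2) * W = 1 := mul_nonsing_inv _ hA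
  have hWA : W * (1 + V ^ 2) = 1 := nonsing_inv_mul _ hA
  have hVW : V * W = W * V := calc
    V * W = W * ((1 + V ^ 2) * V) * W := by rw [← mul_assoc, hWA, one_mul]
    _ = W * V * ((1 + V ^ 2) * W) := by noncomm_ring
    _ = W * V := by rw [hAW, mul_one]
  have trace_V : V.trace = (V * W).trace + (V ^ 3 * W).trace := by
    rw [← trace_add]
    congr 1
    calc V = V * ((1 + V ^ 2) * W) := by rw [hAW, mul_one]
      _ = V * W + V ^ 3 * W := by noncomm_ring
  have trace_VRW : (V * R * W).trace = (R * V * W).trace := by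
    rw [mul_assoc, trace_mul_comm, mul_assoc, ← hVW, mul_assoc]
  have expand : ((-V ^ 2 - R) * V + V * (-V ^ 2 - R)) * W
      = -(V ^ 3 * W) - V ^ 3 * W - R * V * W - V * R * W := by noncomm_ring
  rw [expand, sub_mul, trace_V]
  simp only [trace_sub, trace_neg, trace_VRW]
  ring

theorem stmt13_general {m : ℕ} (V V' R : ℝ → Matrix (Fin m) (Fin m) ℝ)
    (hVsym : ∀ t, (V t).IsSymm)
    (hV' : ∀ t i j, HasDerivAt (fun s => V s i j) (V' t i j) t)
    (hRic : ∀ t, V' t = -(V t) ^ 2 - R t)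
    (Φ : ℝ → Matrix (Fin m) (Fin m) ℝ)
    (hΦ : ∀ t i j, HasDerivAt (fun s => Φ s i j) ((V t * Φ t) i j) t)
    (hΦ0 : Φ 0 = 1) :
    ∀ t : ℝ,
      deriv (fun s => Real.log (Real.sqrt (1 + (V s) ^ 2).det * (Φ s).det)) t
        = (1 / 2) * ((V' t * V t + V t * V' t) * (1 + (V t) ^ 2)⁻¹).trace
            + (V t).trace ∧
      (1 / 2) * ((V' t * V t + V t * V' t) * (1 + (V t) ^ 2)⁻¹).trace
            + (V t).trace
        = ((V t - R t * V t) * (1 + (V t) ^ 2)⁻¹).trace := by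
  intro t
  have hdetA_pos : 0 < (1 + V t ^ 2).det :=
    (isHermitian_iff_isSymm.mpr (hVsym t)).posDef_one_add_sq.det_pos
  have hdetA : HasDerivAt (fun s => (1 + V s ^ 2).det)
      (((V' t * V t + V t * V' t) * (1 + V t ^ 2)⁻¹).trace * (1 + V t ^ 2).det) t := by
    refine hasDerivAt_det_of_hasDerivAt_mul fun i j => ?_
    rw [mul_assoc, nonsing_inv_mul _ hdetA_pos.ne'.isUnit, mul_one]
    simpa only [Matrix.add_apply, sq] using
      (hasDerivAt_mul_apply (hV' t) (hV' t) i j).const_add ((1 : Matrix (Fin m) (Fin m) ℝ) i j)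
  have hdetΦ : ∀ u, HasDerivAt (fun s => (Φ s).det) ((V u).trace * (Φ u).det) u :=
    fun u => hasDerivAt_det_of_hasDerivAt_mul (hΦ u)
  have htrace : Continuous fun s => (V s).trace :=
    continuous_finsetSum _ fun i _ =>
      continuous_iff_continuousAt.2 fun s => (hV' s i i).continuousAt
  have hdetΦ_ne : (Φ t).det ≠ 0 := by
    rw [eq_mul_exp_integral_of_hasDerivAt htrace hdetΦ t, hΦ0, det_one, one_mul]
    exact (Real.exp_pos _).ne'
  refine ⟨?_, hRic t ▸ trace_riccati_identity hdetA_pos.ne'.isUnit⟩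
  rw [(hdetA.log_sqrt_mul (hdetΦ t) hdetA_pos hdetΦ_ne).deriv]
  ring

/-- With `A(t) = I + V(t)²`, `V` symmetric solving `V' = -V² - R`, and `Φ` the
fundamental solution of `ξ' = Vξ`, the logarithmic derivative of
`a(t) = √(det A(t)) · det Φ(t)` equals `½ Tr(A'A⁻¹) + Tr V`, which equals
`Tr[(V - RV)(I + V²)⁻¹]`. -/
theorem stmt13 {m : ℕ} (V V' R : ℝ → Matrix (Fin m) (Fin m) ℝ)
    (hVsym : ∀ t, (V t).IsSymm)
    (hV' : ∀ t i j, HasDerivAt (fun s => V s i j) (V' t i j) t)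
    (hV'c : Continuous V')
    (hRic : ∀ t, V' t = -(V t) ^ 2 - R t)
    (Φ : ℝ → Matrix (Fin m) (Fin m) ℝ)
    (hΦ : ∀ t i j, HasDerivAt (fun s => Φ s i j) ((V t * Φ t) i j) t)
    (hΦ0 : Φ 0 = 1) :
    ∀ t : ℝ,
      deriv (fun s => Real.log (Real.sqrt (1 + (V s) ^ 2).det * (Φ s).det)) t
        = (1 / 2) * ((V' t * V t + V t * V' t) * (1 + (V t) ^ 2)⁻¹).trace
            + (V t).trace ∧
      (1 / 2) * ((V' t * V t + V t * V' t) * (1 + (V t) ^ 2)⁻¹).trace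
            + (V t).trace
        = ((V t - R t * V t) * (1 + (V t) ^ 2)⁻¹).trace :=
  stmt13_general V V' R hVsym hV' hRic Φ hΦ hΦ0
end
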